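/- arXiv:1910.04440 — 2 statements merged into one kernel-verified Lean document; each statement's English description precedes it below -/
import Mathlib

section
/- Let g, r ∈ ℕ, let n : Fin (r+1) → ℕ and d : Fin (r+1) → ℤ, and set N := ∑ᵢ n i and D := ∑ᵢ (d i − i*(2g−2)*(n i)) ∈ ℤ. Assume N > 0 and gcd(N, D) = 1. Then for every tuple n' : Fin (r+1) → ℕ with n' i ≤ n i for all i, with n' j < n j for at least one j, and with ∑ᵢ n' i > 0, and for every tuple d' : Fin (r+1) → ℤ, one has μ_{α_H}(n',d') ≠ μ_{α_H}(n,d). In other words, the Higgs stability parameter α_H is non-critical for the invariants (n,d) of any chain whose associated Higgs bundle has coprime rank and degree. -/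
open scoped BigOperators

/-- The `α`-slope of a chain with rank vector `n` and degree vector `d`. -/
noncomputable def muSlope (r : ℕ) (n : Fin (r + 1) → ℕ) (d : Fin (r + 1) → ℤ)
    (α : Fin (r + 1) → ℝ) : ℝ :=
  (∑ i, ((d i : ℝ) + α i * (n i : ℝ))) / (∑ i, (n i : ℝ))

/-- The Higgs stability parameter `α_H` of length `r` for a genus `g` curve:
`α_H i = (r - i) * (2g - 2)`. -/
noncomputable def higgsParam (g r : ℕ) : Fin (r + 1) → ℝ :=
  fun i => ((r : ℝ) - (i : ℕ)) * (2 * (g : ℝ) - 2)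

lemma muSlope_higgs (g r : ℕ) (n : Fin (r + 1) → ℕ) (d : Fin (r + 1) → ℤ)
    (hpos : 0 < ∑ i, n i) :
    muSlope r n d (higgsParam g r)
      = ((∑ i, (d i - (i : ℤ) * (2 * (g : ℤ) - 2) * (n i : ℤ)) : ℤ) : ℝ)
          / ((∑ i, n i : ℕ) : ℝ) + (r : ℝ) * (2 * (g : ℝ) - 2) := by
  have hS : (0:ℝ) < ∑ i, (n i : ℝ) := by
    have : ((∑ i, n i : ℕ) : ℝ) = ∑ i, (n i : ℝ) := by push_cast; ring
    rw [← this]; exact_mod_cast hpos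
  have hS' : ((∑ i, n i : ℕ) : ℝ) = ∑ i, (n i : ℝ) := by push_cast; ring
  rw [muSlope, hS']
  push_cast
  rw [div_add' _ _ _ hS.ne']
  congr 1
  have hms : (r:ℝ)*(2*(g:ℝ)-2) * ∑ i, (n i:ℝ) = ∑ i, (r:ℝ)*(2*(g:ℝ)-2)*(n i:ℝ) :=
    Finset.mul_sum _ _ _
  rw [hms, ← Finset.sum_add_distrib]
  apply Finset.sum_congr rfl
  intro i _
  simp only [higgsParam]
  ring

/-- If the total rank `N = ∑ᵢ n i` and total Higgs degree
`D = ∑ᵢ (d i - i (2g-2) (n i))` are coprime, then the Higgs stability parameter `α_H`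
is non-critical for the invariants `(n, d)`: no proper nonzero sub-invariants `(n', d')`
have the same `α_H`-slope. -/
theorem higgsParam_noncritical (g r : ℕ) (n : Fin (r + 1) → ℕ) (d : Fin (r + 1) → ℤ)
    (N : ℕ) (D : ℤ) (hN : N = ∑ i, n i)
    (hD : D = ∑ i, (d i - (i : ℤ) * (2 * (g : ℤ) - 2) * (n i : ℤ)))
    (hNpos : 0 < N) (hcop : Int.gcd (N : ℤ) D = 1) :
    ∀ (n' : Fin (r + 1) → ℕ) (d' : Fin (r + 1) → ℤ),
      (∀ i, n' i ≤ n i) → (∃ j, n' j < n j) → 0 < ∑ i, n' i →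
        muSlope r n' d' (higgsParam g r) ≠ muSlope r n d (higgsParam g r) := by
  intro n' d' hle ⟨j, hj⟩ hpos heq
  set N' : ℕ := ∑ i, n' i with hN'
  set D' : ℤ := ∑ i, (d' i - (i : ℤ) * (2 * (g : ℤ) - 2) * (n' i : ℤ)) with hD'
  have hNN' : N' < N := by
    rw [hN]
    exact Finset.sum_lt_sum (fun i _ => hle i) ⟨j, Finset.mem_univ j, hj⟩
  rw [muSlope_higgs g r n' d' hpos, muSlope_higgs g r n d (hN ▸ hNpos)] at heq
  have h1 : (D' : ℝ) / (N' : ℝ) = (D : ℝ) / (N : ℝ) := by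
    rw [hD', hN', hD, hN] at *
    linarith [heq]
  have hNR : ((N' : ℕ) : ℝ) ≠ 0 := by exact_mod_cast hpos.ne'
  have hNR2 : ((N : ℕ) : ℝ) ≠ 0 := by exact_mod_cast hNpos.ne'
  have h2 : (D' : ℝ) * (N : ℝ) = (D : ℝ) * (N' : ℝ) := by
    field_simp at h1
    linarith [h1]
  have h3 : D' * (N : ℤ) = D * (N' : ℤ) := by exact_mod_cast h2
  have hdvd : (N : ℤ) ∣ D * (N' : ℤ) := ⟨D', by linarith [h3]⟩
  have hcop' : IsCoprime (N : ℤ) D := Int.isCoprime_iff_gcd_eq_one.mpr hcop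
  have hdvd2 : (N : ℤ) ∣ (N' : ℤ) := hcop'.dvd_of_dvd_mul_left hdvd
  have : N ∣ N' := Int.ofNat_dvd.mp hdvd2
  exact absurd (Nat.le_of_dvd hpos this) (not_le.mpr hNN')
end

section
/- Let C be a triangulated category with small coproducts carrying a monoidal structure with unit 𝟙 such that, for every object X, the functors X ⊗ − and − ⊗ X commute with the shift, send distinguished triangles to distinguished triangles, and preserve small coproducts. Then for every object M of C, the localizing tensor subcategory generated by M equals the localizing subcategory generated by the set of tensor powers of M: ⟪M⟫^⊗ = ⟪{M^{⊗n} : n ∈ ℕ}⟫, where M^{⊗0} := 𝟙. -/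
open CategoryTheory CategoryTheory.Limits CategoryTheory.Pretriangulated
open CategoryTheory.MonoidalCategory

universe v u

variable {C : Type u} [Category.{v} C]

section Defs

variable [HasZeroObject C] [HasShift C ℤ] [Preadditive C]
  [∀ n : ℤ, (shiftFunctor C n).Additive] [Pretriangulated C]

/-- A triangulated subcategory of `C`, given as a class of objects: it contains the zero
objects, is closed under isomorphism, under the shift and its inverse, and whenever two of
the three objects of a distinguished triangle lie in the class, so does the third. -/
def IsTriangulatedSub (S : Set C) : Prop :=
  (∀ X : C, IsZero X → X ∈ S) ∧
  (∀ X Y : C, X ∈ S → Nonempty (X ≅ Y) → Y ∈ S) ∧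
  (∀ X : C, X ∈ S → X⟦(1 : ℤ)⟧ ∈ S) ∧
  (∀ X : C, X ∈ S → X⟦(-1 : ℤ)⟧ ∈ S) ∧
  (∀ T : Triangle C, (T ∈ distTriang C) →
    ((T.obj₁ ∈ S → T.obj₂ ∈ S → T.obj₃ ∈ S) ∧
     (T.obj₁ ∈ S → T.obj₃ ∈ S → T.obj₂ ∈ S) ∧
     (T.obj₂ ∈ S → T.obj₃ ∈ S → T.obj₁ ∈ S)))

/-- A localizing subcategory: a triangulated subcategory closed under small coproducts. -/
def IsLocalizingSub [HasCoproducts.{v} C] (S : Set C) : Prop :=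
  IsTriangulatedSub S ∧
    ∀ (ι : Type v) (X : ι → C), (∀ i, X i ∈ S) → (∐ X) ∈ S

/-- A localizing tensor subcategory: a localizing subcategory containing the monoidal unit
and closed under tensor products of its members. -/
def IsLocalizingTensorSub [HasCoproducts.{v} C] [MonoidalCategory C] (S : Set C) : Prop :=
  IsLocalizingSub S ∧ (𝟙_ C) ∈ S ∧ ∀ X Y : C, X ∈ S → Y ∈ S → X ⊗ Y ∈ S

/-- The smallest localizing subcategory containing a set `G` of objects. -/
def localizingGen [HasCoproducts.{v} C] (G : Set C) : Set C :=
  ⋂₀ {S : Set C | IsLocalizingSub S ∧ G ⊆ S}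

/-- The smallest localizing tensor subcategory containing a set `G` of objects. -/
def localizingTensorGen [HasCoproducts.{v} C] [MonoidalCategory C] (G : Set C) : Set C :=
  ⋂₀ {S : Set C | IsLocalizingTensorSub S ∧ G ⊆ S}

/-- The tensor powers of an object, with `M^{⊗0} = 𝟙`. -/
def tensorPow [MonoidalCategory C] (M : C) : ℕ → C
  | 0 => 𝟙_ C
  | (n + 1) => tensorPow M n ⊗ M

end Defs

section Aux

variable [HasZeroObject C] [HasShift C ℤ] [Preadditive C]
  [∀ n : ℤ, (shiftFunctor C n).Additive] [Pretriangulated C] [HasCoproducts.{v} C]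

lemma isLocalizingSub_localizingGen (G : Set C) : IsLocalizingSub (localizingGen G) := by
  constructor
  · refine ⟨?_, ?_, ?_, ?_, ?_⟩
    · intro X hX S hS
      exact hS.1.1.1 X hX
    · intro X Y hX e S hS
      exact hS.1.1.2.1 X Y (hX S hS) e
    · intro X hX S hS
      exact hS.1.1.2.2.1 X (hX S hS)
    · intro X hX S hS
      exact hS.1.1.2.2.2.1 X (hX S hS)
    · intro T hT
      refine ⟨?_, ?_, ?_⟩
      · intro h1 h2 S hS
        exact (hS.1.1.2.2.2.2 T hT).1 (h1 S hS) (h2 S hS)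
      · intro h1 h3 S hS
        exact (hS.1.1.2.2.2.2 T hT).2.1 (h1 S hS) (h3 S hS)
      · intro h2 h3 S hS
        exact (hS.1.1.2.2.2.2 T hT).2.2 (h2 S hS) (h3 S hS)
  · intro ι X hX S hS
    exact hS.1.2 ι X (fun i => hX i S hS)

lemma subset_localizingGen (G : Set C) : G ⊆ localizingGen G := by
  intro X hX S hS
  exact hS.2 hX

lemma localizingGen_subset {G S : Set C} (h : IsLocalizingSub S) (hG : G ⊆ S) :
    localizingGen G ⊆ S :=
  Set.sInter_subset_of_mem ⟨h, hG⟩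

lemma isLocalizingSub_preimage (F : C ⥤ C) [F.CommShift ℤ] [F.IsTriangulated]
    [∀ (ι : Type v), PreservesColimitsOfShape (Discrete ι) F]
    {S : Set C} (hS : IsLocalizingSub S) :
    IsLocalizingSub {Y : C | F.obj Y ∈ S} := by
  obtain ⟨⟨hzero, hiso, hsh, hshinv, htri⟩, hcoprod⟩ := hS
  constructor
  · refine ⟨?_, ?_, ?_, ?_, ?_⟩
    · intro X hX
      exact hzero _ (F.map_isZero hX)
    · intro X Y hX ⟨e⟩
      exact hiso _ _ hX ⟨F.mapIso e⟩
    · intro X hX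
      refine hiso _ _ (hsh _ hX) ⟨((F.commShiftIso (1 : ℤ)).app X).symm⟩
    · intro X hX
      refine hiso _ _ (hshinv _ hX) ⟨((F.commShiftIso (-1 : ℤ)).app X).symm⟩
    · intro T hT
      have hT' := F.map_distinguished T hT
      exact htri _ hT'
  · intro ι X hX
    have := hcoprod ι (fun i => F.obj (X i)) hX
    exact hiso _ _ this ⟨(PreservesCoproduct.iso F X).symm⟩

lemma tensorPowAdd [MonoidalCategory C] (M : C) (n m : ℕ) :
    Nonempty (tensorPow M n ⊗ tensorPow M m ≅ tensorPow M (n + m)) := by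
  induction m with
  | zero => exact ⟨ρ_ _⟩
  | succ m ih =>
    obtain ⟨e⟩ := ih
    exact ⟨(α_ _ _ _).symm ≪≫ whiskerRightIso e M⟩

lemma isLocalizingTensorSub_localizingTensorGen [MonoidalCategory C] (G : Set C) :
    IsLocalizingTensorSub (localizingTensorGen G) := by
  refine ⟨⟨⟨?_, ?_, ?_, ?_, ?_⟩, ?_⟩, ?_, ?_⟩
  · intro X hX S hS
    exact hS.1.1.1.1 X hX
  · intro X Y hX e S hS
    exact hS.1.1.1.2.1 X Y (hX S hS) e
  · intro X hX S hS
    exact hS.1.1.1.2.2.1 X (hX S hS)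
  · intro X hX S hS
    exact hS.1.1.1.2.2.2.1 X (hX S hS)
  · intro T hT
    refine ⟨?_, ?_, ?_⟩
    · intro h1 h2 S hS
      exact (hS.1.1.1.2.2.2.2 T hT).1 (h1 S hS) (h2 S hS)
    · intro h1 h3 S hS
      exact (hS.1.1.1.2.2.2.2 T hT).2.1 (h1 S hS) (h3 S hS)
    · intro h2 h3 S hS
      exact (hS.1.1.1.2.2.2.2 T hT).2.2 (h2 S hS) (h3 S hS)
  · intro ι X hX S hS
    exact hS.1.1.2 ι X (fun i => hX i S hS)
  · intro S hS
    exact hS.1.2.1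
  · intro X Y hX hY S hS
    exact hS.1.2.2 X Y (hX S hS) (hY S hS)

lemma subset_localizingTensorGen [MonoidalCategory C] (G : Set C) :
    G ⊆ localizingTensorGen G := by
  intro X hX S hS
  exact hS.2 hX

end Aux

/-- In a triangulated monoidal category with small coproducts in which tensoring (on
either side) with a fixed object is a triangulated functor preserving small coproducts,
the localizing tensor subcategory generated by an object `M` equals the localizing
subcategory generated by the set of tensor powers of `M`. -/
theorem localizingTensorGen_singleton_eq_localizingGen_tensorPow
    [HasZeroObject C] [HasShift C ℤ] [Preadditive C]
    [∀ n : ℤ, (shiftFunctor C n).Additive] [Pretriangulated C] [MonoidalCategory C]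
    [HasCoproducts.{v} C]
    [∀ X : C, (tensorLeft X).CommShift ℤ] [∀ X : C, (tensorRight X).CommShift ℤ]
    [∀ X : C, (tensorLeft X).IsTriangulated] [∀ X : C, (tensorRight X).IsTriangulated]
    [∀ (ι : Type v) (X : C), PreservesColimitsOfShape (Discrete ι) (tensorLeft X)]
    [∀ (ι : Type v) (X : C), PreservesColimitsOfShape (Discrete ι) (tensorRight X)]
    (M : C) :
    localizingTensorGen {M} = localizingGen (Set.range (tensorPow M)) := by
  set L := localizingGen (Set.range (tensorPow M)) with hLdef
  have hLloc : IsLocalizingSub L := isLocalizingSub_localizingGen _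
  have hpow : ∀ n, tensorPow M n ∈ L := fun n => subset_localizingGen _ ⟨n, rfl⟩
  have stepA : ∀ (n : ℕ) (Y : C), Y ∈ L → tensorPow M n ⊗ Y ∈ L := by
    intro n Y hY
    have hsub : IsLocalizingSub {Y : C | (tensorLeft (tensorPow M n)).obj Y ∈ L} :=
      isLocalizingSub_preimage _ hLloc
    have hsubset : L ⊆ {Y : C | (tensorLeft (tensorPow M n)).obj Y ∈ L} := by
      apply localizingGen_subset hsub
      rintro _ ⟨m, rfl⟩
      obtain ⟨e⟩ := tensorPowAdd M n m
      exact hLloc.1.2.1 _ _ (hpow (n + m)) ⟨e.symm⟩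
    exact hsubset hY
  have stepB : ∀ X Y : C, X ∈ L → Y ∈ L → X ⊗ Y ∈ L := by
    intro X Y hX hY
    have hsub : IsLocalizingSub {Z : C | (tensorRight Y).obj Z ∈ L} :=
      isLocalizingSub_preimage _ hLloc
    have hsubset : L ⊆ {Z : C | (tensorRight Y).obj Z ∈ L} := by
      apply localizingGen_subset hsub
      rintro _ ⟨n, rfl⟩
      exact stepA n Y hY
    exact hsubset hX
  have hLtensor : IsLocalizingTensorSub L := ⟨hLloc, hpow 0, stepB⟩
  have hML : M ∈ L := hLloc.1.2.1 _ _ (hpow 1) ⟨λ_ M⟩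
  apply Set.Subset.antisymm
  · exact Set.sInter_subset_of_mem ⟨hLtensor, Set.singleton_subset_iff.2 hML⟩
  · refine localizingGen_subset (isLocalizingTensorSub_localizingTensorGen {M}).1 ?_
    rintro _ ⟨n, rfl⟩
    induction n with
    | zero => exact (isLocalizingTensorSub_localizingTensorGen {M}).2.1
    | succ n ih =>
      exact (isLocalizingTensorSub_localizingTensorGen {M}).2.2 _ _ ih
        (subset_localizingTensorGen {M} rfl)
end
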